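/- arXiv:1610.01106 — 2 statements merged into one kernel-verified Lean document; each statement's English description precedes it below -/
import Mathlib

section
/- Every simple even-cycle matroid of rank r has at most r^2 - r + 1 elements in its ground set. -/
open Set Matroid

noncomputable section

/-- Augmentation property for linear independence of columns. -/
theorem colIndep_aug {K V n : Type*} [Field K] [AddCommGroup V] [Module K V]
    [FiniteDimensional K V] [Finite n] (v : n → V) {I J : Set n}
    (hI : LinearIndependent K (fun i : I => v i)) (hJ : LinearIndependent K (fun i : J => v i))
    (hcard : I.ncard < J.ncard) :
    ∃ e ∈ J, e ∉ I ∧ LinearIndependent K (fun i : ↥(insert e I) => v i) := by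
  classical
  by_contra h
  push_neg at h
  have hspan : ∀ e ∈ J, v e ∈ Submodule.span K (v '' I) := by
    intro e he
    by_cases heI : e ∈ I
    · exact Submodule.subset_span ⟨e, heI, rfl⟩
    by_contra hsp
    exact h e he heI ((linearIndepOn_insert heI).2 ⟨hI, hsp⟩)
  have hle : Submodule.span K (v '' J) ≤ Submodule.span K (v '' I) := by
    rw [Submodule.span_le]
    rintro _ ⟨e, he, rfl⟩
    exact hspan e he
  haveI : Fintype I := (Set.toFinite I).fintype
  haveI : Fintype J := (Set.toFinite J).fintype
  have hIcard : Module.finrank K (Submodule.span K (v '' I)) = I.ncard := by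
    rw [Set.image_eq_range, finrank_span_eq_card hI, Set.ncard_eq_toFinset_card',
      Set.toFinset_card]
  have hJcard : Module.finrank K (Submodule.span K (v '' J)) = J.ncard := by
    rw [Set.image_eq_range, finrank_span_eq_card hJ, Set.ncard_eq_toFinset_card',
      Set.toFinset_card]
  have := Submodule.finrank_mono (R := K) hle
  omega

/-- The column matroid of a matrix over `GF(2)`: the matroid on the columns of `A`,
where a set of columns is independent iff it is linearly independent over `GF(2)`. -/
def colMatroid {m n : Type*} [Fintype m] [Fintype n] (A : Matrix m n (ZMod 2)) : Matroid n :=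
  (IndepMatroid.ofFinite (Set.finite_univ (α := n))
    (fun I => LinearIndependent (ZMod 2) (fun i : I => A.transpose i))
    linearIndependent_empty_type
    (fun I J hJ hIJ => hJ.comp (Set.inclusion hIJ) (Set.inclusion_injective hIJ))
    (fun I J hI hJ hc => colIndep_aug A.transpose hI hJ hc)
    (fun I _ => Set.subset_univ I)).matroid

namespace Matroid

/-- Deletion of a set of elements from a matroid. -/
def del {α : Type*} (M : Matroid α) (D : Set α) : Matroid α := M ↾ (M.E \ D)

/-- Contraction of a set of elements from a matroid, defined by duality. -/
def con {α : Type*} (M : Matroid α) (C : Set α) : Matroid α := (M✶.del C)✶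

/-- Matroid isomorphism: a bijection between ground sets preserving independence. -/
def IsoTo {α β : Type*} (M : Matroid α) (N : Matroid β) : Prop :=
  ∃ φ : α → β, Set.BijOn φ M.E N.E ∧ ∀ I ⊆ M.E, (M.Indep I ↔ N.Indep (φ '' I))

/-- `M` has a minor isomorphic to `N`. -/
def HasMinorIsoTo {α β : Type*} (M : Matroid α) (N : Matroid β) : Prop :=
  ∃ C D : Set α, ((M.con C).del D).IsoTo N

/-- A binary matroid: one isomorphic to the column matroid of a matrix over `GF(2)`. -/
def IsBinary {α : Type*} (M : Matroid α) : Prop :=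
  ∃ (k l : ℕ) (A : Matrix (Fin k) (Fin l) (ZMod 2)), M.IsoTo (colMatroid A)

/-- A simple matroid: no loops and no pair of distinct parallel elements,
i.e. every subset of the ground set of size at most two is independent. -/
def IsSimple' {α : Type*} (M : Matroid α) : Prop :=
  ∀ e ∈ M.E, ∀ f ∈ M.E, M.Indep {e, f}

/-- `N` is a simplification of `M`: `N` is a simple restriction of `M` containing
an element of every parallel class of `M`. -/
def IsSimplificationOf {α : Type*} (N M : Matroid α) : Prop :=
  ∃ S ⊆ M.E, N = M ↾ S ∧ N.IsSimple' ∧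
    ∀ e ∈ M.E, M.Indep {e} → ∃ f ∈ S, e = f ∨ ¬ M.Indep {e, f}

/-- `N` is a cosimplification of `M`: the dual of `N` is a simplification of the dual of `M`. -/
def IsCosimplificationOf {α : Type*} (N M : Matroid α) : Prop :=
  N✶.IsSimplificationOf M✶

/-- A circuit: a minimal dependent set. -/
def IsCircuitOf {α : Type*} (M : Matroid α) (C : Set α) : Prop :=
  C ⊆ M.E ∧ ¬ M.Indep C ∧ ∀ D ⊂ C, M.Indep D

end Matroid

/-- `r` is a row of `A` such that every column of `A` has at most two nonzero entries
outside row `r`. -/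
def EvenCycleRep {m n : Type*} (A : Matrix m n (ZMod 2)) (r : m) : Prop :=
  ∀ j : n, ({i : m | i ≠ r ∧ A i j ≠ 0}).ncard ≤ 2

/-- An even-cycle matroid: one isomorphic to the column matroid of a `GF(2)` matrix having
a row `r` such that every column has at most two nonzero entries outside row `r`. -/
def Matroid.IsEvenCycle {α : Type*} (M : Matroid α) : Prop :=
  ∃ (k l : ℕ) (A : Matrix (Fin k) (Fin l) (ZMod 2)) (r : Fin k),
    EvenCycleRep A r ∧ M.IsoTo (colMatroid A)

/-- Every column of `A` has at most two nonzero entries. -/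
def GraphicRep {m n : Type*} (A : Matrix m n (ZMod 2)) : Prop :=
  ∀ j : n, ({i : m | A i j ≠ 0}).ncard ≤ 2

/-- A graphic matroid: one isomorphic to the column matroid of a `GF(2)` matrix in which
every column has at most two nonzero entries. -/
def Matroid.IsGraphic {α : Type*} (M : Matroid α) : Prop :=
  ∃ (k l : ℕ) (A : Matrix (Fin k) (Fin l) (ZMod 2)),
    GraphicRep A ∧ M.IsoTo (colMatroid A)

/-- A cographic matroid: the dual of a graphic matroid. -/
def Matroid.IsCographic {α : Type*} (M : Matroid α) : Prop := M✶.IsGraphic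

/-- An even-cut matroid: one isomorphic to the column matroid of a `GF(2)` matrix `A` having a
row `r` such that the column matroid of the matrix obtained by deleting row `r` is cographic. -/
def Matroid.IsEvenCut {α : Type*} (M : Matroid α) : Prop :=
  ∃ (k l : ℕ) (A : Matrix (Fin k) (Fin l) (ZMod 2)) (r : Fin k),
    (colMatroid (A.submatrix (Subtype.val : {i : Fin k // i ≠ r} → Fin k) id)).IsCographic ∧
    M.IsoTo (colMatroid A)

/-- `r₁, r₂` are rows of `A` such that every column of `A` either has at most one nonzero entry
outside rows `r₁, r₂`, or has exactly two nonzero entries outside rows `r₁, r₂` and is zero in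
both rows `r₁` and `r₂`. -/
def BlockingPairRep {m n : Type*} (A : Matrix m n (ZMod 2)) (r₁ r₂ : m) : Prop :=
  ∀ j : n, ({i : m | i ≠ r₁ ∧ i ≠ r₂ ∧ A i j ≠ 0}).ncard ≤ 1 ∨
    (({i : m | i ≠ r₁ ∧ i ≠ r₂ ∧ A i j ≠ 0}).ncard = 2 ∧ A r₁ j = 0 ∧ A r₂ j = 0)

/-- An even-cycle matroid with a blocking pair. -/
def Matroid.IsEvenCycleBP {α : Type*} (M : Matroid α) : Prop :=
  ∃ (k l : ℕ) (A : Matrix (Fin k) (Fin l) (ZMod 2)) (r₁ r₂ : Fin k), r₁ ≠ r₂ ∧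
    BlockingPairRep A r₁ r₂ ∧ M.IsoTo (colMatroid A)

/-- `N` is an excluded minor for the class of matroids satisfying `P`. -/
def IsExcludedMinorFor {α : Type*} (N : Matroid α) (P : Matroid α → Prop) : Prop :=
  ¬ P N ∧ ∀ e ∈ N.E, P (N.del {e}) ∧ P (N.con {e})

/-- The points of the binary projective space `PG(3,2)`: nonzero vectors of `GF(2)^4`. -/
abbrev PGIdx : Type := {v : Fin 4 → ZMod 2 // v ≠ 0}

/-- The matrix whose columns are the 15 nonzero vectors of `GF(2)^4`. -/
def PGMatrix : Matrix (Fin 4) PGIdx (ZMod 2) := fun i v => v.1 i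

/-- The binary projective geometry `PG(3,2)`. -/
def PG32 : Matroid PGIdx := colMatroid PGMatrix

/-- The vertex-edge incidence matrix of a simple graph on vertex set `V` whose edges are a
set of pairs `(u, w)` with `u < w`. -/
def incMatrix {k : ℕ} (E : Type*) (val : E → Fin k × Fin k) :
    Matrix (Fin k) E (ZMod 2) :=
  fun i e => if i = (val e).1 ∨ i = (val e).2 then 1 else 0

/-- Edges of `K7` minus two adjacent edges. -/
abbrev L19Edge : Type := {p : Fin 7 × Fin 7 // p.1 < p.2 ∧ p ≠ (0, 1) ∧ p ≠ (0, 2)}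

/-- `L19`: the dual of the cycle matroid of `K7` minus two adjacent edges. -/
def L19 : Matroid L19Edge := (colMatroid (incMatrix L19Edge Subtype.val))✶

/-- The matroid `L11`. -/
def L11 : Matroid (Fin 11) :=
  colMatroid (!![1,0,0,0,0,0,1,0,1,0,1;
                 0,1,0,0,0,0,1,0,0,1,1;
                 0,0,1,0,0,0,0,1,1,1,0;
                 0,0,0,1,0,0,0,1,1,0,1;
                 0,0,0,0,1,0,0,1,0,1,1;
                 0,0,0,0,0,1,0,0,1,1,1] : Matrix (Fin 6) (Fin 11) (ZMod 2))

/-- Edges of the complete graph `K6`. -/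
abbrev K6Edge : Type := {p : Fin 6 × Fin 6 // p.1 < p.2}

/-- The cycle matroid `M(K6)`. -/
def MK6 : Matroid K6Edge := colMatroid (incMatrix K6Edge Subtype.val)

/-- Edges of `K6` minus an edge. -/
abbrev K6eEdge : Type := {p : Fin 6 × Fin 6 // p.1 < p.2 ∧ p ≠ (0, 1)}

/-- The cycle matroid `M(K6 \ e)`. -/
def MK6e : Matroid K6eEdge := colMatroid (incMatrix K6eEdge Subtype.val)

/-- Edges of the complete graph `K5`. -/
abbrev K5Edge : Type := {p : Fin 5 × Fin 5 // p.1 < p.2}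

/-- The cycle matroid `M(K5)`. -/
def MK5 : Matroid K5Edge := colMatroid (incMatrix K5Edge Subtype.val)

/-- The matroid `H12`. -/
def H12 : Matroid (Fin 12) :=
  colMatroid (!![1,0,1,0,1,0,1,0,1,0,1,0;
                 0,0,0,0,1,1,1,1,0,0,0,0;
                 0,0,0,0,1,1,0,0,1,1,0,0;
                 1,1,0,0,0,0,0,0,0,0,1,1;
                 0,0,1,1,0,0,1,1,0,0,1,1] : Matrix (Fin 5) (Fin 12) (ZMod 2))

end

/-!
Represent the matroid by the distinct nonzero columns `S ⊆ GF(2)^k` of an even-cycle matrix with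
special row `a`; they span a space of dimension `r`.

Nonzero vectors of weight at most two spanning a space of dimension `d` are the edges of a graph
(with half-edges) of rank `d`, so there are at most `d(d+1)/2` of them: the vectors through a
fixed coordinate form an independent star, and deleting them lowers the rank.

Erasing coordinate `a` maps `S` to such vectors. If the unit vector `e_a` lies in the span of `S`,
the image spans a space of dimension at most `r - 1`, and every fibre has at most two points
except the fibre `{e_a}` over `0`; hence `|S| ≤ 1 + (r - 1)r`. Otherwise erasing `a` is injective
on `S` and `|S| ≤ r(r+1)/2 ≤ r² - r + 1`.
-/

open Set Function Module Submodule

theorem LinearIndepOn.ncard_le_finrank_span {K V : Type*} [Field K] [AddCommGroup V] [Module K V]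
    [FiniteDimensional K V] {T S : Set V} (hT : LinearIndepOn K id T) (hTS : T ⊆ span K S) :
    T.ncard ≤ finrank K (span K S) := by
  have := hT.finite
  have := Fintype.ofFinite T
  rw [ncard_eq_toFinset_card', ← finrank_span_set_eq_card hT]
  exact Submodule.finrank_mono (span_le.2 hTS)

theorem Submodule.finrank_map_lt_of_mem_ker {K V V₂ : Type*} [Field K] [AddCommGroup V]
    [Module K V] [AddCommGroup V₂] [Module K V₂] [FiniteDimensional K V] {f : V →ₗ[K] V₂}
    {W : Submodule K V} {x : V} (hxW : x ∈ W) (hx : x ≠ 0) (hfx : f x = 0) :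
    finrank K (W.map f) < finrank K W := by
  have h := LinearMap.finrank_range_add_finrank_ker (f.domRestrict W)
  rw [LinearMap.range_domRestrict] at h
  have : 0 < finrank K (LinearMap.ker (f.domRestrict W)) :=
    finrank_pos_iff_exists_ne_zero.2 ⟨⟨⟨x, hxW⟩, by simpa using hfx⟩, by simpa using hx⟩
  omega

section WeightTwo

variable {ι : Type*}

theorem support_injective_zmod_two : Injective (support : (ι → ZMod 2) → Set ι) := by
  have key : ∀ x y : ZMod 2, (x ≠ 0 ↔ y ≠ 0) → x = y := by decide
  intro v w h
  funext i
  exact key _ _ (Set.ext_iff.1 h i)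

variable [Finite ι]

theorem support_eq_pair {M : Type*} [Zero M] {v : ι → M} {a c : ι} (hac : a ≠ c)
    (ha : v a ≠ 0) (hc : v c ≠ 0) (hv : (support v).ncard ≤ 2) : support v = {a, c} :=
  (Set.eq_of_subset_of_ncard_le (by simp [insert_subset_iff, ha, hc])
    (by rwa [ncard_pair hac]) (toFinite _)).symm

theorem linearIndepOn_of_apply_ne_zero_of_support_ncard_le_two {T : Set (ι → ZMod 2)} {a : ι}
    (ha : ∀ w ∈ T, w a ≠ 0) (hT : ∀ w ∈ T, (support w).ncard ≤ 2) :
    LinearIndepOn (ZMod 2) id T := by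
  classical
  rw [linearIndepOn_iff]
  intro l hl hsum
  have hcoord : ∀ i, ∑ w ∈ l.support, l w * w i = 0 := fun i => by
    simpa [Finsupp.linearCombination_apply, Finsupp.sum] using congrFun hsum i
  -- `w` is the only vector of `T` that is nonzero at `c`
  have hother : ∀ w ∈ T, ∀ c ≠ a, w c ≠ 0 → l w = 0 := by
    intro w hw c hca hwc
    have := hcoord c
    rwa [Finset.sum_eq_single w, mul_eq_zero, or_iff_left hwc] at this
    · intro u hu huw
      by_contra h
      rw [mul_eq_zero, not_or] at h
      exact huw (support_injective_zmod_two <| by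
        rw [support_eq_pair hca.symm (ha u (hl hu)) h.2 (hT u (hl hu)),
          support_eq_pair hca.symm (ha w hw) hwc (hT w hw)])
    · simp +contextual
  have hsupp : ∀ w ∈ l.support, support w = {a} := by
    intro w hw
    ext c
    by_cases hca : c = a
    · simp [hca, ha w (hl hw)]
    · simpa [hca] using fun hwc => Finsupp.mem_support_iff.1 hw (hother w (hl hw) c hca hwc)
  by_contra hne
  obtain ⟨w, hw⟩ := Finsupp.support_nonempty_iff.2 hne
  have := hcoord a
  rw [Finset.sum_eq_single_of_mem w hw fun u hu huw =>
    absurd (support_injective_zmod_two ((hsupp u hu).trans (hsupp w hw).symm)) huw] at this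
  exact mul_ne_zero (Finsupp.mem_support_iff.1 hw) (ha w (hl hw)) this

theorem ncard_mul_two_le_of_support_ncard_le_two {S : Set (ι → ZMod 2)} {d : ℕ} (h0 : 0 ∉ S)
    (hS : ∀ v ∈ S, (support v).ncard ≤ 2) (hd : finrank (ZMod 2) (span (ZMod 2) S) ≤ d) :
    S.ncard * 2 ≤ d * (d + 1) := by
  induction d generalizing S with
  | zero =>
    rw [Nat.le_zero, Submodule.finrank_eq_zero, span_eq_bot] at hd
    have : S = ∅ := eq_empty_of_forall_notMem fun v hv => h0 (hd v hv ▸ hv)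
    simp [this]
  | succ d ih =>
    obtain rfl | ⟨v, hv⟩ := S.eq_empty_or_nonempty
    · simp
    obtain ⟨a, ha⟩ := Function.ne_iff.1 (ne_of_mem_of_not_mem hv h0)
    set Sa := S ∩ {w | w a ≠ 0}
    set S0 := S \ {w | w a ≠ 0}
    have hSa : Sa.ncard ≤ d + 1 := by
      have hind : LinearIndepOn (ZMod 2) id Sa :=
        linearIndepOn_of_apply_ne_zero_of_support_ncard_le_two (fun w hw => hw.2)
          (fun w hw => hS w hw.1)
      exact (hind.ncard_le_finrank_span (inter_subset_left.trans subset_span)).trans hd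
    have hS0 : S0.ncard * 2 ≤ d * (d + 1) := by
      refine ih (fun h => h0 h.1) (fun w hw => hS w hw.1)
        (Nat.le_of_lt_succ (lt_of_lt_of_le ?_ hd))
      refine Submodule.finrank_lt_finrank_of_lt
        (lt_of_le_of_ne (span_mono sdiff_subset) fun heq => ha ?_)
      have : span (ZMod 2) S0 ≤ LinearMap.ker (LinearMap.proj a) :=
        span_le.2 fun w hw => by simpa using hw.2
      simpa using this (heq ▸ subset_span hv)
    have hsplit := ncard_inter_add_ncard_sdiff_eq_ncard S {w | w a ≠ 0}
    nlinarith

end WeightTwo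

section EraseCoord

variable {ι K : Type*} [DecidableEq ι] [Ring K]

def eraseCoord (a : ι) : (ι → K) →ₗ[K] ι → K :=
  LinearMap.id - (LinearMap.proj a).smulRight (Pi.single a 1)

theorem eraseCoord_apply (a : ι) (v : ι → K) : eraseCoord a v = v - v a • Pi.single a 1 := rfl

theorem support_eraseCoord (a : ι) (v : ι → K) :
    support (eraseCoord a v) = {i | i ≠ a ∧ v i ≠ 0} := by
  ext i
  by_cases h : i = a <;> simp [eraseCoord_apply, h]

theorem eraseCoord_single (a : ι) : eraseCoord a (Pi.single a (1 : K)) = 0 := by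
  simp [eraseCoord_apply]

theorem eq_single_of_eraseCoord_eq_zero {a : ι} {v : ι → ZMod 2} (hv : v ≠ 0)
    (h : eraseCoord a v = 0) : v = Pi.single a 1 := by
  rw [eraseCoord_apply, sub_eq_zero] at h
  have ha : v a ≠ 0 := fun ha => hv (by rw [h, ha, zero_smul])
  have hne : ∀ x : ZMod 2, x ≠ 0 → x = 1 := by decide
  rw [h, hne _ ha, one_smul]

theorem eq_eraseCoord_or_eq_eraseCoord_add (a : ι) (v : ι → ZMod 2) :
    v = eraseCoord a v ∨ v = eraseCoord a v + Pi.single a 1 := by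
  have : v a = 0 ∨ v a = 1 := by generalize v a = x; revert x; decide
  rcases this with h | h <;> simp [eraseCoord_apply, h]

end EraseCoord

theorem ncard_le_sq_sub_add_one_of_ncard_support_off_le_two {ι : Type*} [Finite ι]
    {S : Set (ι → ZMod 2)} {r : ℕ} (a : ι) (h0 : 0 ∉ S)
    (hS : ∀ v ∈ S, {i | i ≠ a ∧ v i ≠ 0}.ncard ≤ 2)
    (hr : finrank (ZMod 2) (span (ZMod 2) S) ≤ r) :
    S.ncard ≤ r ^ 2 - r + 1 := by
  classical
  set π : (ι → ZMod 2) →ₗ[ZMod 2] ι → ZMod 2 := eraseCoord a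
  set e : ι → ZMod 2 := Pi.single a 1
  have hπS : ∀ u ∈ π '' S, (support u).ncard ≤ 2 := by
    rintro _ ⟨v, hv, rfl⟩
    rw [support_eraseCoord]
    exact hS v hv
  have hsq : r ^ 2 - r = (r - 1) * r := by rw [Nat.sub_one_mul, sq]
  by_cases he : e ∈ span (ZMod 2) S
  · set T := π '' S \ {0}
    have hTrank : finrank (ZMod 2) (span (ZMod 2) T) + 1 ≤ r := by
      have hlt :=
        Submodule.finrank_map_lt_of_mem_ker (f := π) he (by simp [e]) (eraseCoord_single a)
      rw [← span_image] at hlt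
      have hTS :
          finrank (ZMod 2) (span (ZMod 2) T) ≤ finrank (ZMod 2) (span (ZMod 2) (π '' S)) :=
        Submodule.finrank_mono (span_mono sdiff_subset)
      omega
    have hT : T.ncard * 2 ≤ (r - 1) * r := by
      have := ncard_mul_two_le_of_support_ncard_le_two (d := r - 1)
        (fun h : (0 : ι → ZMod 2) ∈ T => h.2 rfl) (fun u (hu : u ∈ T) => hπS u hu.1)
        (by omega)
      rwa [Nat.sub_add_cancel (by omega : 1 ≤ r)] at this
    have hcover : S \ {e} ⊆ T ∪ (· + e) '' T := by
      intro v ⟨hv, hve⟩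
      have hπv : π v ∈ T := ⟨⟨v, hv, rfl⟩, fun h =>
        hve (eq_single_of_eraseCoord_eq_zero (ne_of_mem_of_not_mem hv h0) h)⟩
      rcases eq_eraseCoord_or_eq_eraseCoord_add a v with h | h
      · exact .inl (h ▸ hπv)
      · exact .inr ⟨π v, hπv, h.symm⟩
    have hcount : S.ncard ≤ 1 + 2 * T.ncard := by
      have h1 := ncard_le_ncard_sdiff_add_ncard S {e}
      have h2 := ncard_le_ncard hcover (toFinite _)
      have h3 := ncard_union_le T ((· + e) '' T)
      have h4 := ncard_image_le (f := (· + e)) (toFinite T)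
      rw [ncard_singleton] at h1
      omega
    rw [hsq]
    omega
  · have hinj : InjOn π S := by
      intro v hv w hw hvw
      by_contra hne
      have hdiff : v - w = e :=
        eq_single_of_eraseCoord_eq_zero (sub_ne_zero.2 hne) (by rw [map_sub, hvw, sub_self])
      exact he (hdiff ▸ sub_mem (subset_span hv) (subset_span hw))
    have hπ0 : 0 ∉ π '' S := by
      rintro ⟨v, hv, h⟩
      have hve : v = e := eq_single_of_eraseCoord_eq_zero (ne_of_mem_of_not_mem hv h0) h
      exact he (hve ▸ subset_span hv)
    have hrank : finrank (ZMod 2) (span (ZMod 2) (π '' S)) ≤ r := by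
      rw [span_image]
      exact (Submodule.finrank_map_le _ _).trans hr
    have hT := ncard_mul_two_le_of_support_ncard_le_two hπ0 hπS hrank
    rw [← hinj.ncard_image, hsq]
    rcases r with _ | s
    · omega
    · simp only [Nat.add_sub_cancel]
      nlinarith [Nat.le_mul_self s]

namespace Matroid

variable {α β : Type*} {M : Matroid α}

theorem IsoTo.exists_eq_map {N : Matroid β} (h : M.IsoTo N) :
    ∃ (φ : α → β) (hφ : InjOn φ M.E), N = M.map φ hφ := by
  obtain ⟨φ, hbij, hiff⟩ := h
  refine ⟨φ, hbij.injOn, ext_indep hbij.image_eq.symm fun I hI => ?_⟩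
  rw [map_indep_iff]
  constructor
  · intro hIi
    have hpre : φ '' (M.E ∩ φ ⁻¹' I) = I := by
      rw [image_inter_preimage, hbij.image_eq, inter_eq_right.2 hI]
    exact ⟨_, (hiff _ inter_subset_left).2 (by rwa [hpre]), hpre.symm⟩
  · rintro ⟨I₀, hI₀, rfl⟩
    exact (hiff _ hI₀.subset_ground).1 hI₀

theorem IsSimple'.map (hM : M.IsSimple') (φ : α → β) (hφ : InjOn φ M.E) :
    (M.map φ hφ).IsSimple' := by
  rintro _ ⟨e, he, rfl⟩ _ ⟨f, hf, rfl⟩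
  rw [← image_pair]
  exact (hM e he f hf).map φ hφ

end Matroid

section ColMatroid

open scoped Matrix

variable {m n : Type*} [Fintype m] [Fintype n] {A : Matrix m n (ZMod 2)}

theorem colMatroid_indep_iff {I : Set n} :
    (colMatroid A).Indep I ↔ LinearIndepOn (ZMod 2) Aᵀ I := Iff.rfl

theorem colMatroid_ground : (colMatroid A).E = univ := rfl

theorem transpose_ne_zero_of_isSimple' (hA : (colMatroid A).IsSimple') (j : n) : Aᵀ j ≠ 0 :=
  (linearIndepOn_singleton_iff _).1 <|
    pair_eq_singleton j ▸ colMatroid_indep_iff.1 (hA j trivial j trivial)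

theorem transpose_injective_of_isSimple' (hA : (colMatroid A).IsSimple') : Injective Aᵀ :=
  fun i j hij => (colMatroid_indep_iff.1 (hA i trivial j trivial)).injOn (by simp) (by simp) hij

theorem finrank_span_range_transpose_le {B : Set n} (hB : (colMatroid A).IsBase B) :
    finrank (ZMod 2) (span (ZMod 2) (range Aᵀ)) ≤ B.ncard := by
  have hspan : range Aᵀ ⊆ span (ZMod 2) (Aᵀ '' B) := by
    rintro _ ⟨j, rfl⟩
    by_cases hj : j ∈ B
    · exact subset_span (mem_image_of_mem _ hj)
    by_contra hjB
    exact (hB.insert_dep ⟨trivial, hj⟩).not_indep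
      (colMatroid_indep_iff.2 ((linearIndepOn_insert hj).2 ⟨hB.indep, hjB⟩))
  calc finrank (ZMod 2) (span (ZMod 2) (range Aᵀ))
      ≤ finrank (ZMod 2) (span (ZMod 2) (Aᵀ '' B)) := Submodule.finrank_mono (span_le.2 hspan)
    _ = (Aᵀ '' B).ncard := by
      have := Fintype.ofFinite (Aᵀ '' B)
      rw [ncard_eq_toFinset_card']
      exact finrank_span_set_eq_card (colMatroid_indep_iff.1 hB.indep).id_image
    _ ≤ B.ncard := ncard_image_le (toFinite B)

theorem colMatroid_ncard_ground_le {r : m} (hA : EvenCycleRep A r)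
    (hs : (colMatroid A).IsSimple') {B : Set n} (hB : (colMatroid A).IsBase B) :
    (colMatroid A).E.ncard ≤ B.ncard ^ 2 - B.ncard + 1 := by
  calc (colMatroid A).E.ncard = (range Aᵀ).ncard := by
        rw [colMatroid_ground, ncard_univ,
          ncard_range_of_injective (transpose_injective_of_isSimple' hs)]
    _ ≤ B.ncard ^ 2 - B.ncard + 1 :=
      ncard_le_sq_sub_add_one_of_ncard_support_off_le_two r
        (fun ⟨j, hj⟩ => transpose_ne_zero_of_isSimple' hs j hj)
        (fun _ ⟨j, hj⟩ => hj ▸ hA j)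
        (finrank_span_range_transpose_le hB)

end ColMatroid

/-- Every simple even-cycle matroid of rank `r` has at most `r^2 - r + 1` elements. -/
theorem evenCycle_simple_card_le {α : Type*} (M : Matroid α) (r : ℕ)
    (hec : M.IsEvenCycle) (hs : M.IsSimple') (hr : ∃ B, M.IsBase B ∧ B.ncard = r) :
    M.E.ncard ≤ r ^ 2 - r + 1 := by
  obtain ⟨_, _, A, _, hA, hiso⟩ := hec
  obtain ⟨B, hB, rfl⟩ := hr
  obtain ⟨φ, hφ, hmap⟩ := hiso.exists_eq_map
  have hφB : (φ '' B).ncard = B.ncard := (hφ.mono hB.subset_ground).ncard_image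
  calc M.E.ncard = (colMatroid A).E.ncard := by rw [hmap, map_ground, hφ.ncard_image]
    _ ≤ (φ '' B).ncard ^ 2 - (φ '' B).ncard + 1 :=
      colMatroid_ncard_ground_le hA (hmap ▸ hs.map φ hφ) (hmap ▸ hB.map hφ)
    _ = B.ncard ^ 2 - B.ncard + 1 := by rw [hφB]
end

section
/- Let M be an even-cycle matroid with a blocking pair, and let N be a binary matroid on ground set E(M) together with one new element e such that N/e = M. If e is a coloop of N, or if {e, f} is a series pair of N (a 2-element cocircuit) for some element f, then N is an even-cycle matroid with a blocking pair. -/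
open Set Matroid

/-! In both cases `{e, f}` is a cocircuit of `N` (with `f = e` when `e` is a coloop). Since a
circuit never meets a cocircuit in exactly one element, `N` is determined by `N / e`: a set `I` is
independent in `N` iff `I - e` is independent in `N / e` when `e ∈ I`, and iff `I - f` is when
`e ∉ I`. So if `A` represents `N / e`, then `N` is represented by `A` bordered by a new row, the
indicator vector of `f`, and a new column `e`, the unit vector of that row. Adding the new row to
another row `u` does not change the column matroid. Over `GF(2)`, if the column of `f` has an entry
in a row `u` outside the blocking pair, this moves that entry into the column of `e`, after which
every column again has the blocking-pair shape. -/

open Matrix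

lemma ZMod.eq_zero_or_eq_one (a : ZMod 2) : a = 0 ∨ a = 1 := by
  revert a
  decide

namespace Matroid

variable {α : Type*} {M : Matroid α} {C K I X : Set α} {e f x : α}

lemma isCircuitOf_iff : M.IsCircuitOf C ↔ M.IsCircuit C := by
  rw [isCircuit_iff_forall_ssubset, dep_iff, IsCircuitOf]
  tauto

lemma IsCocircuit.insert_indep_iff (hK : M.IsCocircuit K) (hx : x ∈ K) (hXK : Disjoint X K) :
    M.Indep (insert x X) ↔ M.Indep X := by
  refine ⟨fun h ↦ h.subset (subset_insert _ _), fun hX ↦ ?_⟩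
  by_contra hdep
  obtain ⟨C, hCX, hC⟩ := ((not_indep_iff
    (insert_subset (hK.subset_ground hx) hX.subset_ground)).1 hdep).exists_isCircuit_subset
  have hxC : x ∈ C := by
    by_contra hxC
    exact hC.dep.not_indep (hX.subset ((subset_insert_iff_of_notMem hxC).1 hCX))
  refine hC.inter_isCocircuit_ne_singleton hK (eq_singleton_iff_unique_mem.2 ⟨⟨hxC, hx⟩, ?_⟩)
  rintro y ⟨hyC, hyK⟩
  exact (hCX hyC).resolve_right fun hyX ↦ hXK.notMem_of_mem_left hyX hyK

lemma IsCocircuit.indep_iff_insert_sdiff (hK : M.IsCocircuit {e, f}) (heI : e ∉ I) :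
    M.Indep I ↔ M.Indep (insert e (I \ {f})) := by
  have hdisj : Disjoint (I \ {f}) {e, f} := by
    rw [disjoint_insert_right, disjoint_singleton_right]
    exact ⟨fun h ↦ heI h.1, fun h ↦ h.2 rfl⟩
  rw [hK.insert_indep_iff (mem_insert e {f}) hdisj]
  by_cases hfI : f ∈ I
  · rw [← hK.insert_indep_iff (mem_insert_of_mem e rfl) hdisj, insert_sdiff_self_of_mem hfI]
  · rw [sdiff_singleton_eq_self hfI]

lemma IsNonloop.indep_iff_contractElem_indep (he : M.IsNonloop e) (heI : e ∈ I) :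
    M.Indep I ↔ (M ／ {e}).Indep (I \ {e}) := by
  rw [he.contractElem_indep_iff, insert_sdiff_self_of_mem heI]
  simp

lemma IsCocircuit.indep_iff_contractElem_indep (hK : M.IsCocircuit {e, f}) (heI : e ∉ I) :
    M.Indep I ↔ (M ／ {e}).Indep (I \ {f}) := by
  rw [(hK.isNonloop_of_mem (mem_insert e {f})).contractElem_indep_iff,
    ← hK.indep_iff_insert_sdiff heI]
  exact ⟨fun h ↦ ⟨fun h' ↦ heI h'.1, h⟩, And.right⟩

end Matroid

section LinearAlgebra

variable {K ι : Type*} [Field K] {k : ℕ} {W : ι → Fin (k + 1) → K} {s : Set ι} {a : ι}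

lemma span_image_le_ker_proj_last (hs : ∀ i ∈ s, W i (Fin.last k) = 0) :
    Submodule.span K (W '' s) ≤ LinearMap.ker (LinearMap.proj (Fin.last k)) :=
  Submodule.span_le.2 <| by
    rintro _ ⟨i, hi, rfl⟩
    exact hs i hi

lemma linearIndepOn_iff_init_of_last_eq_zero (hs : ∀ i ∈ s, W i (Fin.last k) = 0) :
    LinearIndepOn K W s ↔ LinearIndepOn K (fun i ↦ Fin.init (W i)) s := by
  refine ((LinearMap.funLeft K K Fin.castSucc).linearIndepOn_iff_of_injOn ?_).symm
  intro v hv w hw hvw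
  funext i
  refine Fin.lastCases ?_ (fun i ↦ congrFun hvw i) i
  exact (span_image_le_ker_proj_last hs hv).trans (span_image_le_ker_proj_last hs hw).symm

lemma linearIndepOn_insert_iff_init_of_last_eq_zero (ha : a ∉ s)
    (hs : ∀ i ∈ s, W i (Fin.last k) = 0) (hWa : W a (Fin.last k) ≠ 0) :
    LinearIndepOn K W (insert a s) ↔ LinearIndepOn K (fun i ↦ Fin.init (W i)) s := by
  rw [linearIndepOn_insert ha, ← linearIndepOn_iff_init_of_last_eq_zero hs]
  exact and_iff_left fun h ↦ hWa (span_image_le_ker_proj_last hs h)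

lemma linearIndepOn_add_smul_iff {V : Type*} [AddCommGroup V] [Module K V] {v : ι → V}
    {c : ι → K} (ha : a ∈ s) (hc : c a = 0) :
    LinearIndepOn K (v + (c · • v a)) s ↔ LinearIndepOn K v s :=
  linearIndependent_add_smul_iff (c := fun i : s ↦ c i) (i := ⟨a, ha⟩) hc

variable [DecidableEq ι]

def coextFamily (u : ι → Fin k → K) (ρ : ι → K) (z : Fin k → K) (e : ι) :
    ι → Fin (k + 1) → K :=
  fun x ↦ if x = e then Fin.snoc z 1 else Fin.snoc (u x + ρ x • z) (ρ x)

variable {u : ι → Fin k → K} {ρ : ι → K} {z : Fin k → K} {e f x : ι}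

@[simp] lemma coextFamily_self : coextFamily u ρ z e e = Fin.snoc z 1 := if_pos rfl

lemma coextFamily_of_ne (hx : x ≠ e) :
    coextFamily u ρ z e x = Fin.snoc (u x + ρ x • z) (ρ x) := if_neg hx

lemma linearIndepOn_coextFamily_iff_of_mem (he : e ∈ s) :
    LinearIndepOn K (coextFamily u ρ z e) s ↔ LinearIndepOn K u (s \ {e}) := by
  -- subtracting `ρ x` times the column of `e` from column `x` clears the last row outside `e`
  have hcol : coextFamily u ρ z e =
      coextFamily u 0 z e + (Function.update ρ e 0 · • coextFamily u 0 z e e) := by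
    funext x i
    by_cases hx : x = e
    · subst hx
      simp
    · refine Fin.lastCases ?_ (fun i ↦ ?_) i <;> simp [coextFamily_of_ne hx, hx]
  rw [hcol, linearIndepOn_add_smul_iff he (by simp)]
  conv_lhs => rw [← insert_sdiff_self_of_mem he]
  rw [linearIndepOn_insert_iff_init_of_last_eq_zero (fun h ↦ h.2 rfl)
    (fun x hx ↦ by simp [coextFamily_of_ne hx.2]) (by simp)]
  exact linearIndepOn_congr fun x hx ↦ by simp [coextFamily_of_ne hx.2]

lemma linearIndepOn_coextFamily_iff_of_notMem (he : e ∉ s) (hρ : ∀ x ∈ s, ρ x ≠ 0 ↔ x = f) :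
    LinearIndepOn K (coextFamily u ρ z e) s ↔ LinearIndepOn K u (s \ {f}) := by
  have hW : ∀ x ∈ s \ {f}, coextFamily u ρ z e x = Fin.snoc (u x) 0 := fun x hx ↦ by
    have hρx : ρ x = 0 := not_not.1 fun h ↦ hx.2 ((hρ x hx.1).1 h)
    simp [coextFamily_of_ne (ne_of_mem_of_not_mem hx.1 he), hρx]
  have hlast : ∀ x ∈ s \ {f}, coextFamily u ρ z e x (Fin.last k) = 0 := fun x hx ↦ by
    simp [hW x hx]
  have hinit : EqOn (fun x ↦ Fin.init (coextFamily u ρ z e x)) u (s \ {f}) := fun x hx ↦ by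
    simp [hW x hx]
  by_cases hf : f ∈ s
  · conv_lhs => rw [← insert_sdiff_self_of_mem hf]
    rw [linearIndepOn_insert_iff_init_of_last_eq_zero (fun h ↦ h.2 rfl) hlast
      (by simpa [coextFamily_of_ne (ne_of_mem_of_not_mem hf he)] using (hρ f hf).2 rfl)]
    exact linearIndepOn_congr hinit
  · rw [sdiff_singleton_eq_self hf] at hlast hinit ⊢
    exact (linearIndepOn_iff_init_of_last_eq_zero hlast).trans (linearIndepOn_congr hinit)

end LinearAlgebra

section BlockingPair

variable {m : Type*} {k : ℕ}

def offPairSupport (w : m → ZMod 2) (r₁ r₂ : m) : Set m := {i | i ≠ r₁ ∧ i ≠ r₂ ∧ w i ≠ 0}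

def IsBlockingPairColumn (w : m → ZMod 2) (r₁ r₂ : m) : Prop :=
  (offPairSupport w r₁ r₂).ncard ≤ 1 ∨
    ((offPairSupport w r₁ r₂).ncard = 2 ∧ w r₁ = 0 ∧ w r₂ = 0)

lemma blockingPairRep_iff {n : Type*} {A : Matrix m n (ZMod 2)} {r₁ r₂ : m} :
    BlockingPairRep A r₁ r₂ ↔ ∀ j, IsBlockingPairColumn (Aᵀ j) r₁ r₂ := Iff.rfl

lemma ncard_offPairSupport_snoc (w : Fin k → ZMod 2) (a : ZMod 2) (r₁ r₂ : Fin k) :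
    (offPairSupport (Fin.snoc w a : Fin (k + 1) → ZMod 2) r₁.castSucc r₂.castSucc).ncard =
      (offPairSupport w r₁ r₂).ncard + if a = 0 then 0 else 1 := by
  classical
  simp only [offPairSupport, Set.ncard_eq_toFinset_card', Set.toFinset_ofPred,
    Finset.card_filter, Fin.sum_univ_castSucc]
  simp [(Fin.castSucc_lt_last r₁).ne', (Fin.castSucc_lt_last r₂).ne']

variable {w : Fin k → ZMod 2} {r₁ r₂ : Fin k}

lemma isBlockingPairColumn_snoc_zero :
    IsBlockingPairColumn (Fin.snoc w 0 : Fin (k + 1) → ZMod 2) r₁.castSucc r₂.castSucc ↔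
      IsBlockingPairColumn w r₁ r₂ := by
  simp [IsBlockingPairColumn, ncard_offPairSupport_snoc]

lemma isBlockingPairColumn_snoc_one :
    IsBlockingPairColumn (Fin.snoc w 1 : Fin (k + 1) → ZMod 2) r₁.castSucc r₂.castSucc ↔
      (offPairSupport w r₁ r₂).ncard = 0 ∨
        ((offPairSupport w r₁ r₂).ncard = 1 ∧ w r₁ = 0 ∧ w r₂ = 0) := by
  simp [IsBlockingPairColumn, ncard_offPairSupport_snoc]

lemma IsBlockingPairColumn.exists_split (hw : IsBlockingPairColumn w r₁ r₂) :
    ∃ z, IsBlockingPairColumn (Fin.snoc (w + z) 1 : Fin (k + 1) → ZMod 2)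
        r₁.castSucc r₂.castSucc ∧
      IsBlockingPairColumn (Fin.snoc z 1 : Fin (k + 1) → ZMod 2) r₁.castSucc r₂.castSucc := by
  simp only [isBlockingPairColumn_snoc_one]
  obtain hS | ⟨u, hu⟩ := (offPairSupport w r₁ r₂).eq_empty_or_nonempty
  · exact ⟨0, by simp [hS], Or.inl (by simp [offPairSupport])⟩
  obtain ⟨hu₁, hu₂, hwu⟩ := id hu
  have hsdiff : offPairSupport (w + Pi.single u 1) r₁ r₂ = offPairSupport w r₁ r₂ \ {u} := by
    ext i
    by_cases hi : i = u
    · subst hi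
      have hwi : w i = 1 := (ZMod.eq_zero_or_eq_one _).resolve_left hwu
      simp [offPairSupport, hwi, show (1 + 1 : ZMod 2) = 0 from rfl]
    · simp [offPairSupport, hi]
  have hsingle : offPairSupport (Pi.single u 1 : Fin k → ZMod 2) r₁ r₂ = {u} := by
    ext i
    by_cases hi : i = u
    · subst hi
      simp [offPairSupport, hu₁, hu₂]
    · simp [offPairSupport, hi]
  refine ⟨Pi.single u 1, ?_, Or.inr ⟨by simp [hsingle], by simp [Ne.symm hu₁, Ne.symm hu₂]⟩⟩
  rw [hsdiff, Set.ncard_sdiff_singleton_of_mem hu]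
  rcases hw with h | ⟨h, h₁, h₂⟩
  · left
    omega
  · exact Or.inr ⟨by omega, by simp [Ne.symm hu₁, h₁], by simp [Ne.symm hu₂, h₂]⟩

end BlockingPair

section CoextMatrix

variable {K : Type*} [Field K] {k l : ℕ}

/-- `[[A + z ρ, z], [ρ, 1]]`, that is, `[[A, 0], [ρ, 1]]` after adding `z i` times the last row
to row `i`. -/
def coextMatrix (A : Matrix (Fin k) (Fin l) K) (ρ : Fin l → K) (z : Fin k → K) :
    Matrix (Fin (k + 1)) (Fin (l + 1)) K :=
  (Matrix.of (Fin.snoc (fun j ↦ Fin.snoc (Aᵀ j + ρ j • z) (ρ j)) (Fin.snoc z 1)))ᵀ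

@[simp] lemma coextMatrix_transpose_last (A : Matrix (Fin k) (Fin l) K) (ρ : Fin l → K)
    (z : Fin k → K) : (coextMatrix A ρ z)ᵀ (Fin.last l) = Fin.snoc z 1 := by
  funext i
  simp [coextMatrix]

@[simp] lemma coextMatrix_transpose_castSucc (A : Matrix (Fin k) (Fin l) K) (ρ : Fin l → K)
    (z : Fin k → K) (j : Fin l) :
    (coextMatrix A ρ z)ᵀ j.castSucc = Fin.snoc (Aᵀ j + ρ j • z) (ρ j) := by
  funext i
  simp [coextMatrix]

lemma coextMatrix_transpose_comp {α : Type*} [DecidableEq α] (A : Matrix (Fin k) (Fin l) K)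
    (ρ : Fin l → K) (z : Fin k → K) (φ : α → Fin l) (e : α) :
    (coextMatrix A ρ z)ᵀ ∘ (fun x ↦ if x = e then Fin.last l else (φ x).castSucc) =
      coextFamily (Aᵀ ∘ φ) (ρ ∘ φ) z e := by
  funext x
  show (coextMatrix A ρ z)ᵀ (if x = e then _ else _) = _
  by_cases hx : x = e
  · simp [hx]
  · simp [hx, coextFamily_of_ne]
    rfl

variable {A : Matrix (Fin k) (Fin l) (ZMod 2)} {r₁ r₂ : Fin k}

lemma blockingPairRep_coextMatrix (hA : BlockingPairRep A r₁ r₂) {ρ : Fin l → ZMod 2}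
    {z : Fin k → ZMod 2}
    (hρ : ∀ j, ρ j ≠ 0 → IsBlockingPairColumn (Fin.snoc (Aᵀ j + z) 1 : Fin (k + 1) → ZMod 2)
      r₁.castSucc r₂.castSucc)
    (hz : IsBlockingPairColumn (Fin.snoc z 1 : Fin (k + 1) → ZMod 2) r₁.castSucc r₂.castSucc) :
    BlockingPairRep (coextMatrix A ρ z) r₁.castSucc r₂.castSucc := by
  rw [blockingPairRep_iff]
  refine Fin.lastCases ?_ fun j ↦ ?_
  · simpa using hz
  · obtain h | h := ZMod.eq_zero_or_eq_one (ρ j)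
    · simpa [h] using isBlockingPairColumn_snoc_zero.2 (blockingPairRep_iff.1 hA j)
    · simpa [h] using hρ j (by simp [h])

lemma exists_coextMatrix_blockingPairRep (hA : BlockingPairRep A r₁ r₂) {T : Set (Fin l)}
    (hT : T.Subsingleton) :
    ∃ ρ z, (∀ j, ρ j ≠ 0 ↔ j ∈ T) ∧
      BlockingPairRep (coextMatrix A ρ z) r₁.castSucc r₂.castSucc := by
  obtain rfl | ⟨j₀, rfl⟩ := hT.eq_empty_or_singleton
  · refine ⟨0, 0, by simp, blockingPairRep_coextMatrix hA (by simp) ?_⟩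
    simp [isBlockingPairColumn_snoc_one, offPairSupport]
  · obtain ⟨z, hj₀, hz⟩ := (blockingPairRep_iff.1 hA j₀).exists_split
    refine ⟨Pi.single j₀ 1, z, fun j ↦ ?_, blockingPairRep_coextMatrix hA (fun j hj ↦ ?_) hz⟩
    · by_cases hj : j = j₀ <;> simp [hj]
    · obtain rfl : j = j₀ := by
        by_contra hj'
        simp [hj'] at hj
      exact hj₀

end CoextMatrix

lemma colMatroid_indep_image_iff {α m n : Type*} [Fintype m] [Fintype n]
    (A : Matrix m n (ZMod 2)) {ψ : α → n} {I : Set α} (hψ : InjOn ψ I) :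
    (colMatroid A).Indep (ψ '' I) ↔ LinearIndepOn (ZMod 2) (Aᵀ ∘ ψ) I := by
  simp only [colMatroid]
  exact ⟨fun h ↦ LinearIndepOn.comp_of_image h hψ, LinearIndepOn.image_of_comp ψ Aᵀ⟩

lemma Matroid.isoTo_colMatroid_iff {α m n : Type*} [Fintype m] [Fintype n] {N : Matroid α}
    {A : Matrix m n (ZMod 2)} :
    N.IsoTo (colMatroid A) ↔ ∃ ψ : α → n, BijOn ψ N.E univ ∧
      ∀ I ⊆ N.E, N.Indep I ↔ LinearIndepOn (ZMod 2) (Aᵀ ∘ ψ) I :=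
  exists_congr fun _ ↦ and_congr_right fun hψ ↦ forall₂_congr fun _ hI ↦ by
    rw [colMatroid_indep_image_iff A (hψ.injOn.mono hI)]

lemma bijOn_insert_of_castSucc {α : Type*} {l : ℕ} {φ : α → Fin l} {ψ : α → Fin (l + 1)}
    {s : Set α} {e : α} (hφ : BijOn φ s univ) (hψe : ψ e = Fin.last l)
    (hψ : ∀ x ∈ s, ψ x = (φ x).castSucc) : BijOn ψ (insert e s) univ := by
  have hcast := (Fin.castSucc_injective l).injOn.bijOn_image.comp hφ
  rw [image_univ] at hcast
  have huniv : (univ : Set (Fin (l + 1))) = insert (Fin.last l) (range Fin.castSucc) := by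
    ext i
    induction i using Fin.lastCases <;> simp [(Fin.castSucc_lt_last _).ne]
  have hlast : ψ e ∉ range Fin.castSucc := by simp [hψe]
  simpa [huniv, hψe] using (hcast.congr fun x hx ↦ (hψ x hx).symm).insert hlast

theorem Matroid.IsCocircuit.isoTo_coextMatrix {α : Type*} [DecidableEq α] {N : Matroid α}
    {e f : α} (hK : N.IsCocircuit {e, f}) {k l : ℕ} {A : Matrix (Fin k) (Fin l) (ZMod 2)}
    {φ : α → Fin l} (hφ : BijOn φ (N.E \ {e}) univ)
    (hA : ∀ J ⊆ N.E \ {e}, (N ／ {e}).Indep J ↔ LinearIndepOn (ZMod 2) (Aᵀ ∘ φ) J)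
    {ρ : Fin l → ZMod 2} (hρ : ∀ x ∈ N.E \ {e}, ρ (φ x) ≠ 0 ↔ x = f) (z : Fin k → ZMod 2) :
    N.IsoTo (colMatroid (coextMatrix A ρ z)) := by
  have heE : e ∈ N.E := hK.subset_ground (mem_insert e {f})
  refine isoTo_colMatroid_iff.2 ⟨fun x ↦ if x = e then Fin.last l else (φ x).castSucc,
    insert_sdiff_self_of_mem heE ▸ bijOn_insert_of_castSucc hφ (if_pos rfl)
      fun x hx ↦ if_neg hx.2, fun I hI ↦ ?_⟩
  rw [coextMatrix_transpose_comp]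
  by_cases heI : e ∈ I
  · rw [linearIndepOn_coextFamily_iff_of_mem heI, ← hA _ (sdiff_subset_sdiff_left hI),
      (hK.isNonloop_of_mem (mem_insert e {f})).indep_iff_contractElem_indep heI]
  · rw [linearIndepOn_coextFamily_iff_of_notMem (ρ := ρ ∘ φ) heI
        fun x hx ↦ hρ x ⟨hI hx, ne_of_mem_of_not_mem hx heI⟩,
      ← hA _ fun x hx ↦ ⟨hI hx.1, ne_of_mem_of_not_mem hx.1 heI⟩,
      hK.indep_iff_contractElem_indep heI]

theorem coextension_evenCycleBP_general {α : Type*} (M N : Matroid α) (e : α) (hcon : N.con {e} = M)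
    (hM : M.IsEvenCycleBP)
    (h : (∀ B, N.IsBase B → e ∈ B) ∨ ∃ f, f ≠ e ∧ (N✶).IsCircuitOf {e, f}) :
    N.IsEvenCycleBP := by
  classical
  subst hcon
  obtain ⟨f, hK⟩ : ∃ f, N.IsCocircuit {e, f} := by
    rcases h with hcoloop | ⟨f, -, hf⟩
    · refine ⟨e, ?_⟩
      rwa [pair_eq_singleton, singleton_isCocircuit, isColoop_iff_forall_mem_isBase]
    · exact ⟨f, isCircuitOf_iff.1 hf⟩
  obtain ⟨k, l, A, r₁, r₂, hr, hA, hiso⟩ := hM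
  obtain ⟨φ, hφ, hNA⟩ := isoTo_colMatroid_iff.1 hiso
  -- the new row is supported on the column of `f`, and is zero when `f = e`
  have hT : (φ '' (N.E \ {e} ∩ {f})).Subsingleton :=
    (subsingleton_singleton.anti inter_subset_right).image φ
  obtain ⟨ρ, z, hρ, hBP⟩ := exists_coextMatrix_blockingPairRep hA hT
  refine ⟨k + 1, l + 1, coextMatrix A ρ z, r₁.castSucc, r₂.castSucc,
    (Fin.castSucc_injective k).ne hr, hBP, hK.isoTo_coextMatrix hφ hNA (fun x hx ↦ ?_) z⟩
  rw [hρ, hφ.injOn.mem_image_iff (inter_subset_left : N.E \ {e} ∩ {f} ⊆ N.E \ {e}) hx]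
  simp [hx]

/-- If `M` is an even-cycle matroid with a blocking pair and `N` is a binary coextension of `M`
by an element `e` (so `N / e = M`) in which `e` is a coloop or belongs to a series pair, then
`N` is an even-cycle matroid with a blocking pair. -/
theorem coextension_evenCycleBP {α : Type*} (M N : Matroid α) (e : α) (he : e ∉ M.E)
    (hE : N.E = insert e M.E) (hbin : N.IsBinary) (hcon : N.con {e} = M)
    (hM : M.IsEvenCycleBP)
    (h : (∀ B, N.IsBase B → e ∈ B) ∨ ∃ f, f ≠ e ∧ (N✶).IsCircuitOf {e, f}) :
    N.IsEvenCycleBP :=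
  coextension_evenCycleBP_general M N e hcon hM h
end
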